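/- arXiv:1910.11159 — 4 statements merged into one kernel-verified Lean document; each statement's English description precedes it below -/
import Mathlib

section
/- Let M = [[a1, b1, c1, d1], [a2, b2, c2, d2]] be a 2×4 integer matrix of rank 2, and let τ be a complex number such that 1, τ, τ² are linearly independent over ℚ. If the 2×2 complex matrix [[a1+b1τ, c1+d1τ], [a2+b2τ, c2+d2τ]] has rank 1 (equivalently, its determinant vanishes and it is nonzero), then either there exists m ∈ ℚ with (c1, d1, c2, d2) = m·(a1, b1, a2, b2), or else a1 = b1 = a2 = b2 = 0. -/
open Matrix

/-- Two vectors in `ℚ²` with proportional coordinates are colinear. -/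
lemma colinear_aux (w v : Fin 2 → ℚ) (hw : w ≠ 0) (h : w 0 * v 1 = w 1 * v 0) :
    ∃ t : ℚ, v = t • w := by
  by_cases h0 : w 0 ≠ 0
  · refine ⟨v 0 / w 0, funext fun i => ?_⟩
    fin_cases i
    · show v 0 = v 0 / w 0 * w 0
      field_simp
    · show v 1 = v 0 / w 0 * w 1
      rw [div_mul_eq_mul_div, eq_div_iff h0]
      linear_combination h
  · push_neg at h0
    have h1 : w 1 ≠ 0 := by
      intro h1
      apply hw
      funext i; fin_cases i <;> simp [h0, h1]
    have hv0 : v 0 = 0 := by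
      have h' := h
      rw [h0, zero_mul] at h'
      exact (mul_eq_zero.mp h'.symm).resolve_left h1
    refine ⟨v 1 / w 1, funext fun i => ?_⟩
    fin_cases i
    · show v 0 = v 1 / w 1 * w 0
      simp [h0, hv0]
    · show v 1 = v 1 / w 1 * w 1
      field_simp
  
/-- If all columns of a matrix over `ℚ` are multiples of a fixed vector,
the rank is at most 1. -/
lemma rank_le_one_aux (A : Matrix (Fin 2) (Fin 4) ℚ) (w : Fin 2 → ℚ) (hw : w ≠ 0)
    (h : ∀ j, ∃ t : ℚ, Aᵀ j = t • w) : A.rank ≤ 1 := by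
  rw [Matrix.rank_eq_finrank_span_cols]
  have hle : Submodule.span ℚ (Set.range Aᵀ) ≤ Submodule.span ℚ {w} := by
    rw [Submodule.span_le]
    rintro x ⟨j, rfl⟩
    obtain ⟨t, ht⟩ := h j
    exact ht ▸ Submodule.smul_mem _ t (Submodule.mem_span_singleton_self w)
  calc Module.finrank ℚ ↥(Submodule.span ℚ (Set.range Aᵀ))
      ≤ Module.finrank ℚ ↥(Submodule.span ℚ {w}) := Submodule.finrank_mono hle
    _ ≤ 1 := (finrank_span_singleton hw).le

theorem stmt_1 (a1 b1 c1 d1 a2 b2 c2 d2 : ℤ) (τ : ℂ)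
    (hrank2 : ((!![a1, b1, c1, d1; a2, b2, c2, d2]).map (Int.cast : ℤ → ℚ)).rank = 2)
    (hτ : ∀ p q r : ℚ, (p : ℂ) + q * τ + r * τ ^ 2 = 0 → p = 0 ∧ q = 0 ∧ r = 0)
    (hrank1 : (!![(a1 : ℂ) + b1 * τ, (c1 : ℂ) + d1 * τ;
                  (a2 : ℂ) + b2 * τ, (c2 : ℂ) + d2 * τ]).rank = 1) :
    (∃ m : ℚ, (c1 : ℚ) = m * a1 ∧ (d1 : ℚ) = m * b1 ∧ (c2 : ℚ) = m * a2 ∧ (d2 : ℚ) = m * b2) ∨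
      (a1 = 0 ∧ b1 = 0 ∧ a2 = 0 ∧ b2 = 0) := by
  -- Step 1: determinant vanishes
  have hdet : ((a1 : ℂ) + b1 * τ) * ((c2 : ℂ) + d2 * τ)
      - ((c1 : ℂ) + d1 * τ) * ((a2 : ℂ) + b2 * τ) = 0 := by
    by_contra hne
    have hu : IsUnit (!![(a1 : ℂ) + b1 * τ, (c1 : ℂ) + d1 * τ;
        (a2 : ℂ) + b2 * τ, (c2 : ℂ) + d2 * τ]).det := by
      rw [Matrix.det_fin_two_of]
      exact isUnit_iff_ne_zero.mpr hne
    have := Matrix.rank_of_isUnit _ ((Matrix.isUnit_iff_isUnit_det _).mpr hu)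
    rw [hrank1] at this
    simp at this
  -- Step 2: extract integer relations
  obtain ⟨hp, hq, hr⟩ := hτ ((a1 * c2 - a2 * c1 : ℤ) : ℚ)
      ((a1 * d2 + b1 * c2 - a2 * d1 - b2 * c1 : ℤ) : ℚ)
      ((b1 * d2 - b2 * d1 : ℤ) : ℚ) (by push_cast; linear_combination hdet)
  have E1 : a1 * c2 - a2 * c1 = 0 := by exact_mod_cast hp
  have E3 : a1 * d2 + b1 * c2 - a2 * d1 - b2 * c1 = 0 := by exact_mod_cast hq
  have E2 : b1 * d2 - b2 * d1 = 0 := by exact_mod_cast hr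
  by_cases hK : (a1 * b2 - a2 * b1 : ℤ) = 0
  · -- degenerate case
    have hAD : a1 * d2 - a2 * d1 = 0 := by
      have hsq : (a1 * d2 - a2 * d1) ^ 2 = 0 := by
        linear_combination (a1 * d2 - a2 * d1) * E3 - (b1 * d2 - b2 * d1) * E1
          + (c1 * d2 - c2 * d1) * hK
      exact pow_eq_zero_iff (two_ne_zero) |>.mp hsq
    have hBC : b1 * c2 - b2 * c1 = 0 := by linear_combination E3 - hAD
    by_cases hz : a1 = 0 ∧ b1 = 0 ∧ a2 = 0 ∧ b2 = 0
    · exact Or.inr hz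
    · exfalso
      set A : Matrix (Fin 2) (Fin 4) ℚ :=
        (!![a1, b1, c1, d1; a2, b2, c2, d2]).map (Int.cast : ℤ → ℚ) with hA
      have K0 : (a1 : ℚ) * b2 - a2 * b1 = 0 := by exact_mod_cast hK
      have E1q : (a1 : ℚ) * c2 - a2 * c1 = 0 := by exact_mod_cast E1
      have E2q : (b1 : ℚ) * d2 - b2 * d1 = 0 := by exact_mod_cast E2
      have hADq : (a1 : ℚ) * d2 - a2 * d1 = 0 := by exact_mod_cast hAD
      have hBCq : (b1 : ℚ) * c2 - b2 * c1 = 0 := by exact_mod_cast hBC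
      have key : ∀ w : Fin 2 → ℚ, w ≠ 0 → (∀ j, w 0 * A 1 j = w 1 * A 0 j) → False := by
        intro w hw hwc
        have hr1 : A.rank ≤ 1 :=
          rank_le_one_aux A w hw (fun j =>
            colinear_aux w (Aᵀ j) hw (by simpa [Matrix.transpose_apply] using hwc j))
        rw [hrank2] at hr1
        norm_num at hr1
      by_cases ha : a1 = 0 ∧ a2 = 0
      · refine key ![(b1 : ℚ), b2] ?_ ?_
        · intro h
          apply hz
          have hb1 : (b1 : ℚ) = 0 := by simpa using congrFun h 0
          have hb2 : (b2 : ℚ) = 0 := by simpa using congrFun h 1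
          exact ⟨ha.1, by exact_mod_cast hb1, ha.2, by exact_mod_cast hb2⟩
        · intro j
          fin_cases j <;> simp [hA, Matrix.map_apply] <;>
            first
            | linear_combination -K0
            | linear_combination hBCq
            | linear_combination E2q
            | ring
      · refine key ![(a1 : ℚ), a2] ?_ ?_
        · intro h
          apply ha
          have h1 : (a1 : ℚ) = 0 := by simpa using congrFun h 0
          have h2 : (a2 : ℚ) = 0 := by simpa using congrFun h 1
          exact ⟨by exact_mod_cast h1, by exact_mod_cast h2⟩
        · intro j
          fin_cases j <;> simp [hA, Matrix.map_apply] <;>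
            first
            | linear_combination K0
            | linear_combination E1q
            | linear_combination hADq
            | ring
  · -- generic case: Cramer's rule
    have hKq : ((a1 : ℚ) * b2 - a2 * b1) ≠ 0 := fun h => hK (by exact_mod_cast h)
    have E1q : (a1 : ℚ) * c2 - a2 * c1 = 0 := by exact_mod_cast E1
    have E2q : (b1 : ℚ) * d2 - b2 * d1 = 0 := by exact_mod_cast E2
    have E3q : (a1 : ℚ) * d2 + b1 * c2 - a2 * d1 - b2 * c1 = 0 := by exact_mod_cast E3
    refine Or.inl ⟨((b2 : ℚ) * c1 - b1 * c2) / ((a1 : ℚ) * b2 - a2 * b1), ?_, ?_, ?_, ?_⟩ <;>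
      rw [div_mul_eq_mul_div, eq_div_iff hKq]
    · linear_combination (b1 : ℚ) * E1q
    · linear_combination (b1 : ℚ) * E3q - (a1 : ℚ) * E2q
    · linear_combination (b2 : ℚ) * E1q
    · linear_combination (b2 : ℚ) * E3q - (a2 : ℚ) * E2q
end

section
/- Let M = [[a1, b1, c1, d1], [a2, b2, c2, d2]] be a 2×4 integer matrix of rank 2, and let τ1, τ2 be complex numbers such that 1, τ1, τ2, τ1τ2 are linearly independent over ℚ. If the 2×2 complex matrix [[a1+b1τ1, c1+d1τ2], [a2+b2τ1, c2+d2τ2]] has rank 1, then either c1 = d1 = c2 = d2 = 0 or a1 = b1 = a2 = b2 = 0. -/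
open Matrix

lemma aux_rank_le_one (M : Matrix (Fin 2) (Fin 4) ℚ) (p q : ℚ) (hpq : p ≠ 0 ∨ q ≠ 0)
    (h : ∀ j, p * M 0 j + q * M 1 j = 0) : M.rank ≤ 1 := by
  set f : (Fin 2 → ℚ) →ₗ[ℚ] ℚ :=
    p • (LinearMap.proj 0) + q • (LinearMap.proj 1) with hf
  have hker : LinearMap.range M.mulVecLin ≤ LinearMap.ker f := by
    rintro v ⟨x, rfl⟩
    simp only [hf, LinearMap.mem_ker, LinearMap.add_apply, LinearMap.smul_apply,
      LinearMap.proj_apply, smul_eq_mul, Matrix.mulVecLin_apply, Matrix.mulVec, dotProduct]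
    rw [Fin.sum_univ_four, Fin.sum_univ_four]
    have h0 := h 0; have h1 := h 1; have h2 := h 2; have h3 := h 3
    linear_combination x 0 * h0 + x 1 * h1 + x 2 * h2 + x 3 * h3
  have hfne : f ≠ 0 := by
    intro h0
    rcases hpq with hp | hq
    · have := congrArg (fun g => g (Pi.single 0 1)) h0
      simp [hf, Pi.single] at this
      tauto
    · have := congrArg (fun g => g (Pi.single 1 1)) h0
      simp [hf, Pi.single] at this
      tauto
  have hkerlt : LinearMap.ker f < ⊤ := by
    rw [lt_top_iff_ne_top]
    intro htop
    exact hfne (LinearMap.ker_eq_top.mp htop)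
  have h2 : Module.finrank ℚ (LinearMap.ker f) < 2 := by
    have := Submodule.finrank_lt_finrank_of_lt hkerlt
    simpa using this
  have h4 : M.rank ≤ Module.finrank ℚ (LinearMap.ker f) :=
    Submodule.finrank_mono hker
  omega

theorem stmt_3 (a1 b1 c1 d1 a2 b2 c2 d2 : ℤ) (τ1 τ2 : ℂ)
    (hrank2 : ((!![a1, b1, c1, d1; a2, b2, c2, d2]).map (Int.cast : ℤ → ℚ)).rank = 2)
    (hτ : ∀ p q r s : ℚ, (p : ℂ) + q * τ1 + r * τ2 + s * (τ1 * τ2) = 0 →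
      p = 0 ∧ q = 0 ∧ r = 0 ∧ s = 0)
    (hrank1 : (!![(a1 : ℂ) + b1 * τ1, (c1 : ℂ) + d1 * τ2;
                  (a2 : ℂ) + b2 * τ1, (c2 : ℂ) + d2 * τ2]).rank = 1) :
    (c1 = 0 ∧ d1 = 0 ∧ c2 = 0 ∧ d2 = 0) ∨ (a1 = 0 ∧ b1 = 0 ∧ a2 = 0 ∧ b2 = 0) := by
  have mz : ∀ x y : ℤ, x ≠ 0 → x * y = 0 → y = 0 := by
    intro x y hx hxy
    rcases mul_eq_zero.mp hxy with h | h
    · exact absurd h hx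
    · exact h
  -- Step 1: determinant of the complex matrix is zero
  have hdet : ((a1 : ℂ) + b1 * τ1) * ((c2 : ℂ) + d2 * τ2)
      - ((c1 : ℂ) + d1 * τ2) * ((a2 : ℂ) + b2 * τ1) = 0 := by
    by_contra hne
    have hu : IsUnit (!![(a1 : ℂ) + b1 * τ1, (c1 : ℂ) + d1 * τ2;
        (a2 : ℂ) + b2 * τ1, (c2 : ℂ) + d2 * τ2]).det := by
      rw [Matrix.det_fin_two_of]
      exact isUnit_iff_ne_zero.mpr hne
    have := Matrix.rank_of_isUnit _ ((Matrix.isUnit_iff_isUnit_det _).mpr hu)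
    rw [hrank1] at this
    simp at this
  -- Step 2: extract the four mixed minors
  have key := hτ ((a1*c2 - c1*a2 : ℤ) : ℚ) ((b1*c2 - c1*b2 : ℤ) : ℚ)
      ((a1*d2 - d1*a2 : ℤ) : ℚ) ((b1*d2 - d1*b2 : ℤ) : ℚ) (by
    push_cast
    linear_combination hdet)
  obtain ⟨hp, hq, hr, hs⟩ := key
  have e1 : a1*c2 - c1*a2 = 0 := by exact_mod_cast hp
  have e2 : b1*c2 - c1*b2 = 0 := by exact_mod_cast hq
  have e3 : a1*d2 - d1*a2 = 0 := by exact_mod_cast hr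
  have e4 : b1*d2 - d1*b2 = 0 := by exact_mod_cast hs
  by_cases hab : a1*b2 - a2*b1 = 0
  · by_cases hcd : c1*d2 - c2*d1 = 0
    · -- all six minors vanish: contradiction with rank 2
      exfalso
      set M := ((!![a1, b1, c1, d1; a2, b2, c2, d2]).map (Int.cast : ℤ → ℚ)) with hM
      by_cases h1 : a1 = 0 ∧ b1 = 0 ∧ c1 = 0 ∧ d1 = 0
      · obtain ⟨z1, z2, z3, z4⟩ := h1
        have : M.rank ≤ 1 := by
          apply aux_rank_le_one M 1 0 (Or.inl one_ne_zero)
          intro j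
          fin_cases j <;> simp [hM, Matrix.map_apply, z1, z2, z3, z4]
        omega
      · push_neg at h1
        have hex : ∃ u v : ℤ, (u*a2 = v*a1 ∧ u*b2 = v*b1 ∧ u*c2 = v*c1 ∧ u*d2 = v*d1) ∧ u ≠ 0 := by
          by_cases ha1 : a1 = 0
          · by_cases hb1 : b1 = 0
            · by_cases hc1 : c1 = 0
              · have hd1 : d1 ≠ 0 := by tauto
                exact ⟨d1, d2, ⟨by linear_combination -e3, by linear_combination -e4,
                  by linear_combination -hcd, by ring⟩, hd1⟩
              · exact ⟨c1, c2, ⟨by linear_combination -e1, by linear_combination -e2,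
                  by ring, by linear_combination hcd⟩, hc1⟩
            · exact ⟨b1, b2, ⟨by linear_combination -hab, by ring,
                by linear_combination e2, by linear_combination e4⟩, hb1⟩
          · exact ⟨a1, a2, ⟨by ring, by linear_combination hab,
              by linear_combination e1, by linear_combination e3⟩, ha1⟩
        obtain ⟨u, v, ⟨g1, g2, g3, g4⟩, hu⟩ := hex
        have q1 : (u:ℚ) * (a2:ℚ) = (v:ℚ) * (a1:ℚ) := by exact_mod_cast g1
        have q2 : (u:ℚ) * (b2:ℚ) = (v:ℚ) * (b1:ℚ) := by exact_mod_cast g2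
        have q3 : (u:ℚ) * (c2:ℚ) = (v:ℚ) * (c1:ℚ) := by exact_mod_cast g3
        have q4 : (u:ℚ) * (d2:ℚ) = (v:ℚ) * (d1:ℚ) := by exact_mod_cast g4
        have huq : (u:ℚ) ≠ 0 := by exact_mod_cast hu
        have : M.rank ≤ 1 := by
          apply aux_rank_le_one M (-(v:ℚ)) (u:ℚ) (Or.inr huq)
          intro j
          fin_cases j <;> simp [hM, Matrix.map_apply] <;> linarith [q1, q2, q3, q4]
        omega
    · -- c-d minor nonzero: a's and b's vanish
      right
      refine ⟨mz _ _ hcd ?_, mz _ _ hcd ?_, mz _ _ hcd ?_, mz _ _ hcd ?_⟩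
      · linear_combination c1*e3 - d1*e1
      · linear_combination c1*e4 - d1*e2
      · linear_combination c2*e3 - d2*e1
      · linear_combination c2*e4 - d2*e2
  · -- a-b minor nonzero: c's and d's vanish
    left
    refine ⟨mz _ _ hab ?_, mz _ _ hab ?_, mz _ _ hab ?_, mz _ _ hab ?_⟩
    · linear_combination b1*e1 - a1*e2
    · linear_combination b1*e3 - a1*e4
    · linear_combination b2*e1 - a2*e2
    · linear_combination b2*e3 - a2*e4
end

section
/- Let a11,b11,a21,b21 and ai,bi,ai',bi' be integers with a11·b21 − a21·b11 ≠ 0, and let τ be a complex number with 1, τ, τ² linearly independent over ℚ. If (a11+b11τ)(ai'+bi'τ) = (a21+b21τ)(ai+biτ), then there exists a rational number l such that ai = l·a11, bi = l·b11, ai' = l·a21, and bi' = l·b21. -/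
theorem stmt_4 (a11 b11 a21 b21 ai bi ai' bi' : ℤ)
    (hdet : a11 * b21 - a21 * b11 ≠ 0) (τ : ℂ)
    (hτ : ∀ p q r : ℚ, (p : ℂ) + q * τ + r * τ ^ 2 = 0 → p = 0 ∧ q = 0 ∧ r = 0)
    (h : ((a11 : ℂ) + b11 * τ) * ((ai' : ℂ) + bi' * τ) =
         ((a21 : ℂ) + b21 * τ) * ((ai : ℂ) + bi * τ)) :
    ∃ l : ℚ, (ai : ℚ) = l * a11 ∧ (bi : ℚ) = l * b11 ∧ (ai' : ℚ) = l * a21 ∧ (bi' : ℚ) = l * b21 := by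
  have key := hτ ((a11 * ai' - a21 * ai : ℤ) : ℚ)
      ((a11 * bi' + b11 * ai' - a21 * bi - b21 * ai : ℤ) : ℚ)
      ((b11 * bi' - b21 * bi : ℤ) : ℚ) (by push_cast; ring_nf; ring_nf at h; linear_combination h)
  obtain ⟨q1, q2, q3⟩ := key
  have e1 : a11 * ai' - a21 * ai = 0 := by exact_mod_cast q1
  have e2 : a11 * bi' + b11 * ai' - a21 * bi - b21 * ai = 0 := by exact_mod_cast q2
  have e3 : b11 * bi' - b21 * bi = 0 := by exact_mod_cast q3
  have hu : a11 * bi - b11 * ai = 0 := by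
    have : (a11 * b21 - a21 * b11) * (a11 * bi - b11 * ai) = (a11 * b21 - a21 * b11) * 0 := by
      linear_combination a11 * b11 * e2 - a11 ^ 2 * e3 - b11 ^ 2 * e1
    exact mul_left_cancel₀ hdet this
  have hw : a11 * bi' - b21 * ai = 0 := by
    have : (a11 * b21 - a21 * b11) * (a11 * bi' - b21 * ai) = (a11 * b21 - a21 * b11) * 0 := by
      linear_combination a11 * b21 * e2 - b11 * b21 * e1 - a11 * a21 * e3
    exact mul_left_cancel₀ hdet this
  have hDq : ((a11 * b21 - a21 * b11 : ℤ) : ℚ) ≠ 0 := Int.cast_ne_zero.mpr hdet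
  have E1 : (a11 : ℚ) * ai' - a21 * ai = 0 := by exact_mod_cast e1
  have E2 : (a11 : ℚ) * bi' + b11 * ai' - a21 * bi - b21 * ai = 0 := by exact_mod_cast e2
  have E3 : (b11 : ℚ) * bi' - b21 * bi = 0 := by exact_mod_cast e3
  have Hu : (a11 : ℚ) * bi - b11 * ai = 0 := by exact_mod_cast hu
  have Hw : (a11 : ℚ) * bi' - b21 * ai = 0 := by exact_mod_cast hw
  refine ⟨(b21 * ai - a21 * bi) / ((a11 * b21 - a21 * b11 : ℤ) : ℚ), ?_, ?_, ?_, ?_⟩ <;>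
    rw [div_mul_eq_mul_div, eq_div_iff hDq] <;> push_cast
  · linear_combination (a21 : ℚ) * Hu
  · linear_combination (b21 : ℚ) * Hu
  · linear_combination (b21 : ℚ) * E1 + (a21 : ℚ) * Hw - (a21 : ℚ) * E2
  · linear_combination (b21 : ℚ) * Hw - (a21 : ℚ) * E3
end

section
/- Let n ≥ 2, let k ≥ 3 be an odd integer, and let l_2, …, l_n be rational numbers. The polynomial (−(l_2 x_2 + ⋯ + l_n x_n))^k + (l_2 x_2^k + ⋯ + l_n x_n^k) in the variables x_2, …, x_n (over ℚ, or ℂ) is the zero polynomial if and only if at most one of the l_i is nonzero and every nonzero l_i belongs to {1, −1}. -/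
open MvPolynomial in
theorem stmt_5 (n : ℕ) (hn : 2 ≤ n) (k : ℕ) (hk : 3 ≤ k) (hodd : Odd k)
    (l : Fin (n - 1) → ℚ) :
    ((-(∑ i, C (l i) * X i)) ^ k + ∑ i, C (l i) * (X i) ^ k
        = (0 : MvPolynomial (Fin (n - 1)) ℚ)) ↔
      ((∀ i j, l i ≠ 0 → l j ≠ 0 → i = j) ∧ ∀ i, l i ≠ 0 → l i = 1 ∨ l i = -1) := by
  have hk0 : k ≠ 0 := by omega
  have hk1 : k - 1 ≠ 0 := by omega
  constructor
  · intro h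
    have heval : ∀ x : Fin (n - 1) → ℚ,
        -((∑ i, l i * x i)) ^ k + ∑ i, l i * (x i) ^ k = 0 := by
      intro x
      have := congrArg (eval x) h
      simpa [Odd.neg_pow hodd, map_sum] using this
    have hlk : ∀ i, (l i) ^ k = l i := by
      intro i
      have h2 := heval (fun m => if m = i then 1 else 0)
      simp only [mul_ite, mul_one, mul_zero, ite_pow, one_pow, zero_pow hk0,
        Finset.sum_ite_eq', Finset.mem_univ, if_true, Odd.neg_pow hodd] at h2
      linarith
    have hpm : ∀ i, l i ≠ 0 → l i = 1 ∨ l i = -1 := by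
      intro i hi
      have h1 : l i ^ (k - 1) * l i = 1 * l i := by
        rw [one_mul, ← pow_succ]
        have : k - 1 + 1 = k := by omega
        rw [this, hlk]
      have h2 : l i ^ (k - 1) = 1 := mul_right_cancel₀ hi h1
      rcases (pow_eq_one_iff_of_ne_zero hk1).mp h2 with h | h
      · exact Or.inl h
      · exact Or.inr h.1
    refine ⟨?_, hpm⟩
    intro i j hi hj
    by_contra hij
    have hsq : ∀ m, l m ≠ 0 → l m * l m = 1 := by
      intro m hm
      rcases hpm m hm with h | h <;> rw [h] <;> norm_num
    have hji : j ≠ i := fun h => hij h.symm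
    set x : Fin (n - 1) → ℚ := fun m => if m = i then l i else if m = j then l j else 0
      with hx
    have hsum : ∀ g : ℚ → ℚ, g 0 = 0 →
        ∑ m, l m * g (x m) = l i * g (l i) + l j * g (l j) := by
      intro g hg
      have : ∀ m, l m * g (x m) =
          (if m = i then l i * g (l i) else 0) + (if m = j then l j * g (l j) else 0) := by
        intro m
        by_cases h1 : m = i
        · subst h1
          simp [hx, hij]
        · by_cases h2 : m = j <;> simp [hx, h1, h2, hg, hji]
      rw [Finset.sum_congr rfl (fun m _ => this m), Finset.sum_add_distrib]
      simp [Finset.sum_ite_eq']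
    have h2 := heval x
    rw [hsum (fun t => t) rfl, hsum (· ^ k) (zero_pow hk0)] at h2
    rw [hlk i, hlk j, hsq i hi, hsq j hj] at h2
    have h3 : (2 : ℚ) ^ 3 ≤ 2 ^ k := by
      apply pow_le_pow_right₀ (by norm_num) hk
    norm_num at h2 h3
    linarith
  · rintro ⟨h1, h2⟩
    by_cases hall : ∀ i, l i = 0
    · simp [hall, zero_pow hk0]
    · push_neg at hall
      obtain ⟨i0, hi0⟩ := hall
      have hzero : ∀ j, j ≠ i0 → l j = 0 := by
        intro j hj
        by_contra hjz
        exact hj (h1 j i0 hjz hi0)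
      have hS : (∑ i, C (l i) * X i : MvPolynomial (Fin (n - 1)) ℚ)
          = C (l i0) * X i0 :=
        Finset.sum_eq_single i0 (fun j _ hj => by rw [hzero j hj]; simp)
          (fun h => absurd (Finset.mem_univ i0) h)
      have hS' : (∑ i, C (l i) * X i ^ k : MvPolynomial (Fin (n - 1)) ℚ)
          = C (l i0) * X i0 ^ k :=
        Finset.sum_eq_single i0 (fun j _ hj => by rw [hzero j hj]; simp)
          (fun h => absurd (Finset.mem_univ i0) h)
      have hlk : (l i0) ^ k = l i0 := by
        rcases h2 i0 hi0 with h | h <;> rw [h]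
        · exact one_pow k
        · exact Odd.neg_one_pow hodd
      rw [hS, hS', Odd.neg_pow hodd, mul_pow, ← C_pow, hlk]
      ring
end
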